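/- Let N ≥ 1, let w₁, …, w_N ≥ 0 and φ₁, …, φ_N ∈ ℝ, and define f(θ) = Σ_{k=1}^N max(w_k cos(θ − φ_k), 0). Then f attains its supremum over ℝ at some θ*, and every global maximizer θ* satisfies: either cos(θ* − φ_k) = 0 for some k with w_k > 0, or f(θ*)² = C² + D², where C = Σ_{k∈S} w_k cos φ_k and D = Σ_{k∈S} w_k sin φ_k with S = {k : cos(θ* − φ_k) ≥ 0}. -/

import Mathlib

/-!
With `S = {k : cos(θ* − φ_k) ≥ 0}`, the sinusoid `g(θ) = Σ_{k∈S} w_k cos(θ − φ_k) =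
C cos θ + D sin θ` lies below `f` everywhere (dropping terms and positive parts only lowers the
sum) and touches it at `θ*`. So a global maximizer `θ*` of `f` also maximizes `g`, and
`f(θ*) = max g = √(C² + D²)`. A maximizer exists since `f` is continuous and `2π`-periodic.
-/

open Finset

theorem Function.Periodic.exists_forall_le_of_continuous {α : Type*} [TopologicalSpace α]
    [LinearOrder α] [ClosedIciTopology α] {f : ℝ → α} {c : ℝ} (hp : Function.Periodic f c)
    (hc : c ≠ 0) (hf : Continuous f) : ∃ x, ∀ y, f y ≤ f x := by
  obtain ⟨_, ⟨x, rfl⟩, hx⟩ :=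
    (hp.compact_of_continuous hc hf).exists_isGreatest (Set.range_nonempty f)
  exact ⟨x, fun y => hx ⟨y, rfl⟩⟩

namespace Real

theorem mul_cos_add_mul_sin_le_sqrt (C D θ : ℝ) :
    C * cos θ + D * sin θ ≤ √(C ^ 2 + D ^ 2) := by
  refine le_sqrt_of_sq_le ?_
  have h := sin_sq_add_cos_sq θ
  nlinarith [sq_nonneg (C * sin θ - D * cos θ)]

theorem exists_mul_cos_add_mul_sin_eq_sqrt (C D : ℝ) :
    ∃ θ, C * cos θ + D * sin θ = √(C ^ 2 + D ^ 2) := by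
  let z : ℂ := ⟨C, D⟩
  have hnorm : ‖z‖ = √(C ^ 2 + D ^ 2) := by
    rw [Complex.norm_def, Complex.normSq_apply, sq, sq]
  refine ⟨z.arg, ?_⟩
  rw [← hnorm]
  nth_rw 1 [show C = z.re from rfl, show D = z.im from rfl]
  rw [← z.norm_mul_cos_arg, ← z.norm_mul_sin_arg]
  linear_combination ‖z‖ * sin_sq_add_cos_sq z.arg

theorem sum_mul_cos_sub {ι : Type*} (s : Finset ι) (w φ : ι → ℝ) (θ : ℝ) :
    ∑ k ∈ s, w k * cos (θ - φ k)
      = (∑ k ∈ s, w k * cos (φ k)) * cos θ + (∑ k ∈ s, w k * sin (φ k)) * sin θ := by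
  simp only [sum_mul, ← sum_add_distrib, cos_sub]
  exact sum_congr rfl fun k _ => by ring

end Real

theorem Finset.sum_filter_le_sum_max_zero {ι M : Type*} [AddCommMonoid M] [LinearOrder M]
    [IsOrderedAddMonoid M] (s : Finset ι) (p : ι → Prop) [DecidablePred p]
    (a : ι → M) : ∑ k ∈ s with p k, a k ≤ ∑ k ∈ s, max (a k) 0 := by
  rw [sum_filter]
  refine sum_le_sum fun k _ => ?_
  split_ifs
  exacts [le_max_left _ _, le_max_right _ _]

theorem Finset.sum_max_zero_eq_sum_filter {ι M : Type*} [AddCommMonoid M] [LinearOrder M]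
    {s : Finset ι} (p : ι → Prop) [DecidablePred p] {a : ι → M}
    (hpos : ∀ k ∈ s, p k → 0 ≤ a k) (hneg : ∀ k ∈ s, ¬p k → a k ≤ 0) :
    ∑ k ∈ s, max (a k) 0 = ∑ k ∈ s with p k, a k := by
  rw [sum_filter]
  refine sum_congr rfl fun k hk => ?_
  split_ifs with hp
  exacts [max_eq_left (hpos k hk hp), max_eq_right (hneg k hk hp)]

theorem stmt_16_general {N : ℕ} (w φ : Fin N → ℝ) (hw : ∀ k, 0 ≤ w k)
    (f : ℝ → ℝ) (hf : f = fun θ => ∑ k, max (w k * Real.cos (θ - φ k)) 0) :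
    (∃ θs : ℝ, ∀ θ : ℝ, f θ ≤ f θs) ∧
    (∀ θs : ℝ, (∀ θ : ℝ, f θ ≤ f θs) →
      (∃ k, 0 < w k ∧ Real.cos (θs - φ k) = 0) ∨
      f θs ^ 2
        = (∑ k ∈ univ.filter (fun k => 0 ≤ Real.cos (θs - φ k)), w k * Real.cos (φ k)) ^ 2
          + (∑ k ∈ univ.filter (fun k => 0 ≤ Real.cos (θs - φ k)), w k * Real.sin (φ k)) ^ 2) := by
  subst hf
  have hper : Function.Periodic (fun θ => ∑ k, max (w k * Real.cos (θ - φ k)) 0) (2 * Real.pi) :=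
    fun θ => by simp only [sub_eq_add_neg, add_right_comm θ, Real.cos_add_two_pi]
  refine ⟨hper.exists_forall_le_of_continuous Real.two_pi_pos.ne' (by fun_prop),
    fun θs hmax => Or.inr ?_⟩
  set S := univ.filter fun k => 0 ≤ Real.cos (θs - φ k)
  set C := ∑ k ∈ S, w k * Real.cos (φ k)
  set D := ∑ k ∈ S, w k * Real.sin (φ k)
  have hdom : ∀ θ, C * Real.cos θ + D * Real.sin θ ≤ ∑ k, max (w k * Real.cos (θ - φ k)) 0 :=
    fun θ => Real.sum_mul_cos_sub S w φ θ ▸ sum_filter_le_sum_max_zero _ _ _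
  have hagree : ∑ k, max (w k * Real.cos (θs - φ k)) 0 = C * Real.cos θs + D * Real.sin θs := by
    rw [← Real.sum_mul_cos_sub, sum_max_zero_eq_sum_filter _
      (fun k _ hk => mul_nonneg (hw k) hk)
      (fun k _ hk => mul_nonpos_of_nonneg_of_nonpos (hw k) (le_of_not_ge hk))]
  obtain ⟨θ₀, hθ₀⟩ := Real.exists_mul_cos_add_mul_sin_eq_sqrt C D
  have hsqrt : ∑ k, max (w k * Real.cos (θs - φ k)) 0 = √(C ^ 2 + D ^ 2) :=
    le_antisymm (hagree ▸ Real.mul_cos_add_mul_sin_le_sqrt C D θs)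
      (hθ₀ ▸ (hdom θ₀).trans (hmax θ₀))
  simp only [hsqrt, Real.sq_sqrt (by positivity : 0 ≤ C ^ 2 + D ^ 2)]

/-- The EOHS objective `f(θ) = Σ_k max(w_k cos(θ − φ_k), 0)` attains its
supremum over `ℝ`, and every global maximizer `θ*` satisfies: either `cos(θ* − φ_k) = 0` for
some `k` with `w_k > 0`, or `f(θ*)² = C² + D²`, where `C, D` are the cosine/sine moment sums
over the active set `S = {k : cos(θ* − φ_k) ≥ 0}`. -/
theorem stmt_16 {N : ℕ} (hN : 1 ≤ N) (w φ : Fin N → ℝ) (hw : ∀ k, 0 ≤ w k)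
    (f : ℝ → ℝ) (hf : f = fun θ => ∑ k, max (w k * Real.cos (θ - φ k)) 0) :
    (∃ θs : ℝ, ∀ θ : ℝ, f θ ≤ f θs) ∧
    (∀ θs : ℝ, (∀ θ : ℝ, f θ ≤ f θs) →
      (∃ k, 0 < w k ∧ Real.cos (θs - φ k) = 0) ∨
      f θs ^ 2
        = (∑ k ∈ univ.filter (fun k => 0 ≤ Real.cos (θs - φ k)), w k * Real.cos (φ k)) ^ 2
          + (∑ k ∈ univ.filter (fun k => 0 ≤ Real.cos (θs - φ k)), w k * Real.sin (φ k)) ^ 2) :=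
  stmt_16_general w φ hw f hf
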